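/- (Voronoi summation formula for the divisor function over 𝔽_q[T].) Let n ≥ 0, let g ∈ 𝔽_q[T] be monic with deg g ≤ n/2, and c ∈ 𝔽_q[T] with gcd(c,g) = 1; let c̄ be any multiplicative inverse of c modulo g. Set μ := 2·deg g − n − 2. Then Σ_{f ∈ M_n} d(f)·e(cf/g) = q^n·(n + 1 − 2·deg g)/|g| + (q^n/|g|) · Σ_{λ ∈ 𝔽_q^×} Σ_{η₁,η₂ ∈ {0,1}} Σ_{0 ≤ k ≤ μ} b_{μ−k}(λ,η₁,η₂) · Σ_{f ∈ M_k} d(f)·e(λc̄f/g), where b_k(λ,η₁,η₂) := (−1)^{k−η₁−η₂}·Kl_2(η₁−1, (1−η₂)λ)·1_{k ≥ η₁+η₂}·C(−η₁−η₂, k−η₁−η₂), and the second term is 0 when μ < 0. -/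

import Mathlib

open Polynomial
open scoped Classical

noncomputable section

/-- The canonical additive character of a finite field `F`:
`e_q(y) = exp(2πi·Tr(y)/p)` where `p` is the characteristic. -/
def eChar (F : Type) [Field F] [Fintype F] (y : F) : ℂ :=
  letI : Algebra (ZMod (ringChar F)) F := ZMod.algebra F (ringChar F)
  Complex.exp (2 * Real.pi * Complex.I *
    ((Algebra.trace (ZMod (ringChar F)) F y).val : ℂ) / (ringChar F : ℂ))

variable {F : Type} [Field F] [Fintype F]

/-- `e(a/g) = e_q(coefficient of T^(deg g - 1) of (a mod g))`. -/
def eFrac (a g : Polynomial F) : ℂ :=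
  eChar F ((a % g).coeff (g.natDegree - 1))

/-- Number of monic divisors of a polynomial. -/
def dCount (f : Polynomial F) : ℕ :=
  Set.ncard {g : Polynomial F | g.Monic ∧ g ∣ f}

/-- `r_χ(f) = Σ_{g monic, g ∣ f} χ(g)`. -/
def rChi (χ : Polynomial F → ℂ) (f : Polynomial F) : ℂ :=
  ∑ᶠ g ∈ {g : Polynomial F | g.Monic ∧ g ∣ f}, χ g

/-- A Dirichlet character modulo `ℓ`: a function induced by a group homomorphism
`(F[T]/(ℓ))^× → ℂ^×`, extended by zero on non-coprime arguments. -/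
def IsDirichletChar (ℓ : Polynomial F) (χ : Polynomial F → ℂ) : Prop :=
  (∀ f g : Polynomial F, f % ℓ = g % ℓ → χ f = χ g) ∧
  (∀ f g : Polynomial F, χ (f * g) = χ f * χ g) ∧ χ 1 = 1 ∧
  ∀ f : Polynomial F, χ f = 0 ↔ ¬ IsCoprime f ℓ

/-- Primitivity: `χ` is not induced by a character modulo a proper (monic) divisor of `ℓ`. -/
def IsPrimitiveChar (ℓ : Polynomial F) (χ : Polynomial F → ℂ) : Prop :=
  IsDirichletChar ℓ χ ∧
  ∀ ℓ' : Polynomial F, ℓ'.Monic → ℓ' ∣ ℓ → ℓ' ≠ ℓ →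
    ¬ ∃ χ' : Polynomial F → ℂ, IsDirichletChar ℓ' χ' ∧
      ∀ f : Polynomial F, IsCoprime f ℓ → χ f = χ' f

/-- Complex conjugate character. -/
def conjChar (χ : Polynomial F → ℂ) : Polynomial F → ℂ := fun f => starRingEnd ℂ (χ f)

/-- `L(s,χ) = Σ_{f monic} χ(f)|f|^{-s}`, summed by degree. -/
def LFun (χ : Polynomial F → ℂ) (s : ℂ) : ℂ :=
  ∑' n : ℕ, (∑ᶠ f ∈ {f : Polynomial F | f.Monic ∧ f.natDegree = n}, χ f) *
    (Fintype.card F : ℂ) ^ (-(s * (n : ℂ)))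

/-- Gauss sum `G(χ) = Σ_{deg a < deg ℓ} χ(a)·e(a/ℓ)`. -/
def GSum (ℓ : Polynomial F) (χ : Polynomial F → ℂ) : ℂ :=
  ∑ᶠ a ∈ {a : Polynomial F | a.degree < ℓ.degree}, χ a * eFrac a ℓ

/-- Kloosterman sum over `F`. -/
def Kl2 (α β : F) : ℂ :=
  ∑ γ : Fˣ, eChar F (α * (γ : F) + β * ((γ⁻¹ : Fˣ) : F))

/-- Twisted Kloosterman sum over `F`. -/
def KlChi (χ : Polynomial F → ℂ) (α β : F) : ℂ :=
  ∑ γ : Fˣ, χ (Polynomial.C (γ : F)) * eChar F (α * (γ : F) + β * ((γ⁻¹ : Fˣ) : F))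

/-- Gauss sum of the restriction of `χ` to `F`. -/
def tauChi (χ : Polynomial F → ℂ) (α : F) : ℂ :=
  ∑ γ : Fˣ, χ (Polynomial.C (γ : F)) * eChar F (α * (γ : F))

/-- Generalized binomial coefficient `C(-m, j)`. -/
def negBinom (m j : ℕ) : ℤ :=
  if m = 0 then (if j = 0 then 1 else 0) else (-1) ^ j * (Nat.choose (m + j - 1) j)

/-- The coefficients `b_k(χ; λ, η₁, η₂)` of the Voronoi summation formula. -/
def bCoeff (χ : Polynomial F → ℂ) (lam : F) (η₁ η₂ k : ℕ) : ℂ :=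
  (-1 : ℂ) ^ (k - η₁ - η₂) * KlChi χ ((η₁ : F) - 1) ((1 - (η₂ : F)) * lam) *
    (if η₁ + η₂ ≤ k then (negBinom (η₁ + η₂) (k - η₁ - η₂) : ℂ) else 0)

/-- The untwisted coefficients `b_k(λ, η₁, η₂)`. -/
def bCoeffD (lam : F) (η₁ η₂ k : ℕ) : ℂ :=
  (-1 : ℂ) ^ (k - η₁ - η₂) * Kl2 ((η₁ : F) - 1) ((1 - (η₂ : F)) * lam) *
    (if η₁ + η₂ ≤ k then (negBinom (η₁ + η₂) (k - η₁ - η₂) : ℂ) else 0)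

/-- The series `Σ_{f monic} c(f)·u^{deg f}` (as a `tsum`). -/
def monicSeries (c : Polynomial F → ℂ) (u : ℂ) : ℂ :=
  ∑' f : {f : Polynomial F // f.Monic}, c f * u ^ (f : Polynomial F).natDegree

/-- `φ` is the rational continuation of the series `u ↦ Σ_{f monic} c(f)·u^{deg f}`:
it agrees with the (convergent) series on `‖u‖ < 1/q` and is a rational function. -/
def IsRatCont (c : Polynomial F → ℂ) (φ : ℂ → ℂ) : Prop :=
  (∃ P Q : Polynomial ℂ, IsCoprime P Q ∧ Q ≠ 0 ∧
    ∀ z : ℂ, Q.eval z ≠ 0 → φ z = P.eval z / Q.eval z) ∧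
  ∀ u : ℂ, ‖u‖ < 1 / (Fintype.card F) →
    HasSum (fun f : {f : Polynomial F // f.Monic} => c f * u ^ (f : Polynomial F).natDegree)
      (φ u)

end

/-!
Since `2 deg g ≤ n`, the exponent `μ = 2 deg g - n - 2` is negative and the dual sum is empty,
so only the main term has to be computed. Counting `d(f)` as the number of factorisations
`f = a b` into monic polynomials turns the sum into `Σ_i Σ_{a ∈ M_i} Σ_{b ∈ M_{n-i}} e(cab/g)`.
For `deg g ≤ j`, the map `b ↦ coeff_{deg g - 1}(h b mod g)` is affine on
`M_j = T^j + F[T]_{<j}`, and its linear part vanishes exactly when `g ∣ h`; by orthogonality of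
the additive character, `Σ_{b ∈ M_j} e(hb/g) = q^j` if `g ∣ h` and `0` otherwise. Since
`i + (n - i) ≥ 2 deg g`, one of the two degrees is at least `deg g`; summing over that factor
first (and using `gcd(c, g) = 1`) shows that the pair of degrees `(i, n - i)` contributes
`q^(n - deg g)` when both are `≥ deg g` and `0` otherwise, and there are `n + 1 - 2 deg g` such
pairs.
-/

section AdditiveCharacter

variable (F : Type) [Field F] [Fintype F]

noncomputable def eCharAddChar : AddChar F ℂ :=
  letI : Algebra (ZMod (ringChar F)) F := ZMod.algebra F (ringChar F)
  haveI : NeZero (ringChar F) := ⟨(CharP.char_is_prime F (ringChar F)).ne_zero⟩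
  ZMod.stdAddChar.compAddMonoidHom (Algebra.trace (ZMod (ringChar F)) F).toAddMonoidHom

variable {F}

theorem eCharAddChar_apply (y : F) : eCharAddChar F y = eChar F y := by
  simp [eCharAddChar, eChar, ZMod.stdAddChar_apply, ZMod.toCircle_apply]

theorem eCharAddChar_ne_zero : eCharAddChar F ≠ 0 := by
  let : Algebra (ZMod (ringChar F)) F := ZMod.algebra F (ringChar F)
  have : NeZero (ringChar F) := ⟨(CharP.char_is_prime F (ringChar F)).ne_zero⟩
  obtain ⟨b, hb⟩ := FiniteField.trace_to_zmod_nondegenerate F (one_ne_zero (α := F))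
  rw [one_mul] at hb
  refine AddChar.ne_zero_iff.mpr ⟨b, fun h => hb ?_⟩
  exact ZMod.injective_stdAddChar (h.trans (AddChar.map_zero_eq_one _).symm)

theorem eChar_add (x y : F) : eChar F (x + y) = eChar F x * eChar F y := by
  simp only [← eCharAddChar_apply, AddChar.map_add_eq_mul]

theorem eChar_zero : eChar F 0 = 1 := by
  rw [← eCharAddChar_apply, AddChar.map_zero_eq_one]

theorem sum_eChar_linearMap {V : Type*} [AddCommGroup V] [Module F V] [Fintype V]
    (ℓ : V →ₗ[F] F) : ∑ v, eChar F (ℓ v) = if ℓ = 0 then (Fintype.card V : ℂ) else 0 := by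
  let ψ := (eCharAddChar F).compAddMonoidHom ℓ.toAddMonoidHom
  have hψ : ψ = 0 ↔ ℓ = 0 := by
    refine ⟨fun h => ?_, fun h => ?_⟩
    · by_contra hℓ
      obtain ⟨y, hy⟩ := AddChar.ne_zero_iff.mp (eCharAddChar_ne_zero (F := F))
      obtain ⟨v, rfl⟩ := LinearMap.range_eq_top.mp (Module.Dual.range_eq_top_of_ne_zero hℓ) y
      exact hy (by simpa [ψ] using DFunLike.congr_fun h v)
    · ext v
      simp [ψ, h]
  rw [← if_congr hψ rfl rfl]
  simpa [ψ, eCharAddChar_apply] using AddChar.sum_eq_ite ψ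

end AdditiveCharacter

section MonicsOfDegree

variable {F : Type} [Field F]

theorem isMonicOfDegree_X_pow_add {m : ℕ} {r : F[X]} (hr : r ∈ degreeLT F m) :
    IsMonicOfDegree (X ^ m + r) m := by
  have hlt : r.degree < (X ^ m : F[X]).degree := by
    rwa [degree_X_pow, ← mem_degreeLT]
  refine ⟨?_, (monic_X_pow m).add_of_left hlt⟩
  rw [natDegree_add_eq_left_of_degree_lt hlt, natDegree_X_pow]

theorem Polynomial.IsMonicOfDegree.sub_X_pow_mem_degreeLT {m : ℕ} {f : F[X]}
    (hf : IsMonicOfDegree f m) : f - X ^ m ∈ degreeLT F m := by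
  have hdeg : f.degree = (X ^ m : F[X]).degree := by
    rw [degree_X_pow, degree_eq_natDegree hf.ne_zero, hf.natDegree_eq]
  rw [mem_degreeLT, ← degree_X_pow (R := F), ← hdeg]
  exact degree_sub_lt_left hdeg hf.ne_zero (by rw [hf.leadingCoeff_eq, leadingCoeff_X_pow])

variable [Fintype F]

variable (F) in
noncomputable def monicsOfDegree (m : ℕ) : Finset F[X] :=
  Finset.univ.image fun v : Fin m → F => X ^ m + ((degreeLTEquiv F m).symm v : F[X])

theorem mem_monicsOfDegree {m : ℕ} {f : F[X]} :
    f ∈ monicsOfDegree F m ↔ IsMonicOfDegree f m := by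
  simp only [monicsOfDegree, Finset.mem_image, Finset.mem_univ, true_and]
  refine ⟨?_, fun hf => ⟨degreeLTEquiv F m ⟨_, hf.sub_X_pow_mem_degreeLT⟩, by simp⟩⟩
  rintro ⟨v, rfl⟩
  exact isMonicOfDegree_X_pow_add (Subtype.property _)

theorem sum_monicsOfDegree {M : Type*} [AddCommMonoid M] (m : ℕ) (φ : F[X] → M) :
    ∑ f ∈ monicsOfDegree F m, φ f =
      ∑ v : Fin m → F, φ (X ^ m + ((degreeLTEquiv F m).symm v : F[X])) :=
  Finset.sum_image fun _ _ _ _ hvw =>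
    (degreeLTEquiv F m).symm.injective (Subtype.ext (add_left_cancel hvw))

theorem card_monicsOfDegree (m : ℕ) : (monicsOfDegree F m).card = Fintype.card F ^ m := by
  rw [Finset.card_eq_sum_ones, sum_monicsOfDegree]
  simp

end MonicsOfDegree

section Divisibility

variable {F : Type} [Field F] [Fintype F] {g : F[X]} {d : ℕ}

theorem filter_dvd_monicsOfDegree (hg : IsMonicOfDegree g d) {i : ℕ} (hdi : d ≤ i) :
    (monicsOfDegree F i).filter (g ∣ ·) = (monicsOfDegree F (i - d)).image (g * ·) := by
  ext f
  simp only [Finset.mem_filter, Finset.mem_image, mem_monicsOfDegree]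
  constructor
  · rintro ⟨hf, b, rfl⟩
    exact ⟨b, hg.of_mul_left (by rwa [Nat.add_sub_cancel' hdi]), rfl⟩
  · rintro ⟨b, hb, rfl⟩
    exact ⟨by simpa [Nat.add_sub_cancel' hdi] using hg.mul hb, dvd_mul_right g b⟩

theorem card_filter_dvd_monicsOfDegree (hg : IsMonicOfDegree g d) (i : ℕ) :
    ((monicsOfDegree F i).filter (g ∣ ·)).card =
      if d ≤ i then Fintype.card F ^ (i - d) else 0 := by
  split_ifs with hdi
  · rw [filter_dvd_monicsOfDegree hg hdi,
      Finset.card_image_of_injective _ (mul_right_injective₀ hg.ne_zero), card_monicsOfDegree]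
  · refine Finset.card_eq_zero.mpr (Finset.filter_eq_empty_iff.mpr fun f hf hgf => hdi ?_)
    rw [mem_monicsOfDegree] at hf
    simpa [hg.natDegree_eq, hf.natDegree_eq] using natDegree_le_of_dvd hgf hf.ne_zero

end Divisibility

section DivisorSum

variable {F : Type} [Field F] [Fintype F]

theorem sum_dCount_mul {R : Type*} [CommSemiring R] (χ : F[X] → R) (n : ℕ) :
    ∑ f ∈ monicsOfDegree F n, (dCount f : R) * χ f =
      ∑ i ∈ Finset.range (n + 1), ∑ a ∈ monicsOfDegree F i, ∑ b ∈ monicsOfDegree F (n - i),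
        χ (a * b) := by
  set B := (Finset.range (n + 1)).biUnion (monicsOfDegree F)
  have hB (a : F[X]) : a ∈ B ↔ a.Monic ∧ a.natDegree ≤ n := by
    simp only [B, Finset.mem_biUnion, Finset.mem_range, mem_monicsOfDegree, isMonicOfDegree_iff']
    exact ⟨fun ⟨i, hi, hdeg, hmon⟩ => ⟨hmon, by omega⟩,
      fun ⟨hmon, hdeg⟩ => ⟨_, by omega, rfl, hmon⟩⟩
  have hdCount (f : F[X]) (hf : f ∈ monicsOfDegree F n) :
      dCount f = (B.filter (· ∣ f)).card := by
    rw [mem_monicsOfDegree] at hf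
    rw [dCount, ← Set.ncard_coe_finset]
    congr 1
    ext a
    simp only [Set.mem_ofPred_eq, Finset.coe_filter, hB]
    exact ⟨fun ⟨hmon, hdvd⟩ =>
      ⟨⟨hmon, hf.natDegree_eq ▸ natDegree_le_of_dvd hdvd hf.ne_zero⟩, hdvd⟩,
      fun ⟨⟨hmon, _⟩, hdvd⟩ => ⟨hmon, hdvd⟩⟩
  calc ∑ f ∈ monicsOfDegree F n, (dCount f : R) * χ f
      = ∑ f ∈ monicsOfDegree F n, ∑ _a ∈ B.filter (· ∣ f), χ f := by
        refine Finset.sum_congr rfl fun f hf => ?_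
        rw [hdCount f hf, Finset.sum_const, nsmul_eq_mul]
    _ = ∑ a ∈ B, ∑ f ∈ (monicsOfDegree F n).filter (a ∣ ·), χ f :=
        Finset.sum_comm' fun f a => by simp only [Finset.mem_filter]; tauto
    _ = ∑ a ∈ B, ∑ b ∈ monicsOfDegree F (n - a.natDegree), χ (a * b) := by
        refine Finset.sum_congr rfl fun a ha => ?_
        obtain ⟨hmon, hdeg⟩ := (hB a).mp ha
        rw [filter_dvd_monicsOfDegree ⟨rfl, hmon⟩ hdeg,
          Finset.sum_image fun _ _ _ _ => mul_left_cancel₀ hmon.ne_zero]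
    _ = ∑ i ∈ Finset.range (n + 1), ∑ a ∈ monicsOfDegree F i,
          ∑ b ∈ monicsOfDegree F (n - a.natDegree), χ (a * b) := by
        refine Finset.sum_biUnion fun i _ j _ hij => Finset.disjoint_left.mpr fun a hai haj => ?_
        rw [mem_monicsOfDegree] at hai haj
        exact hij (hai.natDegree_eq ▸ haj.natDegree_eq)
    _ = _ := by
        refine Finset.sum_congr rfl fun i _ => Finset.sum_congr rfl fun a ha => ?_
        rw [(mem_monicsOfDegree.mp ha).natDegree_eq]

end DivisorSum

section Orthogonality

variable {F : Type} [Field F]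

noncomputable def fracCoeff (g : F[X]) : F[X] →ₗ[F] F :=
  (lcoeff F (g.natDegree - 1)).comp (modByMonicHom g)

theorem eFrac_eq_eChar_fracCoeff [Fintype F] {g : F[X]} (hg : g.Monic) (a : F[X]) :
    eFrac a g = eChar F (fracCoeff g a) := by
  simp [eFrac, fracCoeff, modByMonic_eq_mod a hg]

theorem fracCoeff_mul_eq_zero_of_dvd {g h : F[X]} (hg : g.Monic) (hgh : g ∣ h) (r : F[X]) :
    fracCoeff g (h * r) = 0 := by
  simp [fracCoeff, (modByMonic_eq_zero_iff_dvd hg).mpr (hgh.mul_right r)]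

/-- The witness is `X ^ k`, which shifts the leading term of `h mod g` to `X ^ (deg g - 1)`. -/
theorem exists_fracCoeff_mul_ne_zero {g h : F[X]} (hg : g.Monic) (hgh : ¬g ∣ h) :
    ∃ r ∈ degreeLT F g.natDegree, fracCoeff g (h * r) ≠ 0 := by
  set h₀ := h %ₘ g
  have hh₀ : h₀ ≠ 0 := fun h0 => hgh ((modByMonic_eq_zero_iff_dvd hg).mp h0)
  have he : h₀.natDegree < g.natDegree :=
    natDegree_lt_natDegree hh₀ (degree_modByMonic_lt h hg)
  set k := g.natDegree - 1 - h₀.natDegree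
  have hk : (h₀ * X ^ k).natDegree = g.natDegree - 1 := by
    rw [natDegree_mul_X_pow _ hh₀]
    omega
  have hdeg_lt (p : F[X]) (hp : p.natDegree < g.natDegree) : p.degree < g.degree :=
    (degree_le_natDegree.trans_lt (WithBot.coe_lt_coe.mpr hp)).trans_eq
      (degree_eq_natDegree hg.ne_zero).symm
  have hXk : (X ^ k : F[X]).degree < g.degree := hdeg_lt _ (by rw [natDegree_X_pow]; omega)
  refine ⟨X ^ k, mem_degreeLT.mpr ((hXk.trans_eq (degree_eq_natDegree hg.ne_zero))), ?_⟩
  have hred : (h * X ^ k) %ₘ g = h₀ * X ^ k := by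
    rw [mul_modByMonic, (modByMonic_eq_self_iff hg).mpr hXk,
      (modByMonic_eq_self_iff hg).mpr (hdeg_lt _ (by rw [hk]; omega))]
  simp only [fracCoeff, LinearMap.comp_apply, modByMonicHom_apply, hred, lcoeff_apply, ← hk]
  simpa [coeff_natDegree, leadingCoeff_mul_X_pow] using hh₀

variable [Fintype F]

theorem sum_eFrac_mul_monicsOfDegree {g : F[X]} (hg : g.Monic) {m : ℕ} (hm : g.natDegree ≤ m)
    (h : F[X]) :
    ∑ a ∈ monicsOfDegree F m, eFrac (h * a) g =
      if g ∣ h then (Fintype.card F : ℂ) ^ m else 0 := by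
  let ℓ : (Fin m → F) →ₗ[F] F := fracCoeff g ∘ₗ LinearMap.mulLeft F h ∘ₗ
    (degreeLT F m).subtype ∘ₗ (degreeLTEquiv F m).symm.toLinearMap
  have hℓ : ℓ = 0 ↔ g ∣ h := by
    refine ⟨fun hℓ => ?_, fun hgh => LinearMap.ext fun v =>
      fracCoeff_mul_eq_zero_of_dvd hg hgh _⟩
    by_contra hgh
    obtain ⟨r, hr, hne⟩ := exists_fracCoeff_mul_ne_zero hg hgh
    refine hne ?_
    simpa [ℓ] using LinearMap.congr_fun hℓ (degreeLTEquiv F m ⟨r, degreeLT_mono hm hr⟩)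
  have hsplit (v : Fin m → F) : eFrac (h * (X ^ m + ((degreeLTEquiv F m).symm v : F[X]))) g =
      eChar F (fracCoeff g (h * X ^ m)) * eChar F (ℓ v) := by
    rw [eFrac_eq_eChar_fracCoeff hg, mul_add, map_add, eChar_add]
    rfl
  rw [sum_monicsOfDegree, Finset.sum_congr rfl fun v _ => hsplit v, ← Finset.mul_sum,
    sum_eChar_linearMap, if_congr hℓ rfl rfl]
  split_ifs with hgh
  · simp [fracCoeff_mul_eq_zero_of_dvd hg hgh, eChar_zero]
  · rw [mul_zero]

end Orthogonality

section CharacterSums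

variable {F : Type} [Field F] [Fintype F]

theorem sum_sum_eFrac_mul_mul {g c : F[X]} {d : ℕ} (hg : IsMonicOfDegree g d)
    (hc : IsCoprime c g) {i j : ℕ} (hj : d ≤ j) :
    ∑ a ∈ monicsOfDegree F i, ∑ b ∈ monicsOfDegree F j, eFrac (c * (a * b)) g =
      if d ≤ i then (Fintype.card F : ℂ) ^ (i + j - d) else 0 := by
  have hinner (a : F[X]) :
      ∑ b ∈ monicsOfDegree F j, eFrac (c * (a * b)) g =
        if g ∣ a then (Fintype.card F : ℂ) ^ j else 0 := by
    simp_rw [← mul_assoc c a]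
    rw [sum_eFrac_mul_monicsOfDegree hg.monic (hg.natDegree_eq ▸ hj)]
    exact if_congr ⟨hc.symm.dvd_of_dvd_mul_left, (Dvd.dvd.mul_left · c)⟩ rfl rfl
  rw [Finset.sum_congr rfl fun a _ => hinner a, ← Finset.sum_filter, Finset.sum_const,
    card_filter_dvd_monicsOfDegree hg, nsmul_eq_mul]
  split_ifs with hdi
  · rw [Nat.cast_pow, ← pow_add]
    congr 1
    omega
  · simp

theorem sum_sum_eFrac_mul_mul_of_le_or_le {g c : F[X]} {d : ℕ} (hg : IsMonicOfDegree g d)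
    (hc : IsCoprime c g) {i j : ℕ} (hij : d ≤ i ∨ d ≤ j) :
    ∑ a ∈ monicsOfDegree F i, ∑ b ∈ monicsOfDegree F j, eFrac (c * (a * b)) g =
      if d ≤ i ∧ d ≤ j then (Fintype.card F : ℂ) ^ (i + j - d) else 0 := by
  rcases hij with hi | hj
  · rw [Finset.sum_comm, Finset.sum_congr rfl fun b _ => Finset.sum_congr rfl fun a _ => by
      rw [mul_comm a b], sum_sum_eFrac_mul_mul hg hc hi, add_comm]
    simp [hi]
  · rw [sum_sum_eFrac_mul_mul hg hc hj]
    simp [hj]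

theorem card_filter_range_le_and_le_sub (d n : ℕ) :
    ((Finset.range (n + 1)).filter fun i => d ≤ i ∧ d ≤ n - i).card = n + 1 - 2 * d := by
  have hIcc : (Finset.range (n + 1)).filter (fun i => d ≤ i ∧ d ≤ n - i) =
      Finset.Icc d (n - d) := by
    ext i
    simp only [Finset.mem_filter, Finset.mem_range, Finset.mem_Icc]
    omega
  rw [hIcc, Nat.card_Icc]
  omega

theorem sum_dCount_mul_eFrac_mul {g c : F[X]} {d n : ℕ} (hg : IsMonicOfDegree g d)
    (hc : IsCoprime c g) (hn : 2 * d ≤ n) :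
    ∑ f ∈ monicsOfDegree F n, (dCount f : ℂ) * eFrac (c * f) g =
      ((n + 1 - 2 * d : ℕ) : ℂ) * (Fintype.card F : ℂ) ^ (n - d) := by
  have hterm (i : ℕ) (hi : i ∈ Finset.range (n + 1)) :
      ∑ a ∈ monicsOfDegree F i, ∑ b ∈ monicsOfDegree F (n - i), eFrac (c * (a * b)) g =
        if d ≤ i ∧ d ≤ n - i then (Fintype.card F : ℂ) ^ (n - d) else 0 := by
    rw [Finset.mem_range] at hi
    rw [sum_sum_eFrac_mul_mul_of_le_or_le hg hc (by omega), Nat.add_sub_cancel' (by omega)]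
  rw [sum_dCount_mul, Finset.sum_congr rfl hterm, ← Finset.sum_filter, Finset.sum_const,
    card_filter_range_le_and_le_sub, nsmul_eq_mul]

end CharacterSums

theorem voronoi_divisor_general
    (F : Type) [Field F] [Fintype F] (q : ℕ) (hq : q = Fintype.card F)
    (n : ℕ) (g c cbar : Polynomial F)
    (hg : g.Monic) (hgdeg : 2 * g.natDegree ≤ n)
    (hcop : IsCoprime c g) :
    (∑ᶠ f ∈ {f : Polynomial F | f.Monic ∧ f.natDegree = n},
        (dCount f : ℂ) * eFrac (c * f) g) =
      (q : ℂ) ^ n * ((n : ℂ) + 1 - 2 * (g.natDegree : ℂ)) / (q : ℂ) ^ g.natDegree +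
      (q : ℂ) ^ n / (q : ℂ) ^ g.natDegree *
        ∑ lam : Fˣ, ∑ η₁ ∈ Finset.range 2, ∑ η₂ ∈ Finset.range 2,
          ∑ k ∈ Finset.range (2 * (g.natDegree : ℤ) - (n : ℤ) - 2 + 1).toNat,
            bCoeffD (lam : F) η₁ η₂
                (2 * (g.natDegree : ℤ) - (n : ℤ) - 2 - (k : ℤ)).toNat *
              ∑ᶠ f ∈ {f : Polynomial F | f.Monic ∧ f.natDegree = k},
                (dCount f : ℂ) * eFrac (Polynomial.C (lam : F) * cbar * f) g := by
  subst hq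
  have hdual : (2 * (g.natDegree : ℤ) - n - 2 + 1).toNat = 0 := by omega
  have hMn : {f : F[X] | f.Monic ∧ f.natDegree = n} = ↑(monicsOfDegree F n) := by
    ext f
    simp [mem_monicsOfDegree, isMonicOfDegree_iff', and_comm]
  rw [hdual, Finset.range_zero]
  simp only [Finset.sum_empty, Finset.sum_const_zero, mul_zero, add_zero]
  rw [hMn, finsum_mem_coe_finset, sum_dCount_mul_eFrac_mul ⟨rfl, hg⟩ hcop hgdeg,
    Nat.cast_sub (by omega)]
  have hq : (Fintype.card F : ℂ) ≠ 0 := Nat.cast_ne_zero.mpr Fintype.card_ne_zero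
  rw [eq_div_iff (pow_ne_zero _ hq), mul_assoc, ← pow_add, Nat.sub_add_cancel (by omega)]
  push_cast
  ring

/-- **Voronoi summation formula for the divisor function over `𝔽_q[T]`.** With
`μ = 2·deg g - n - 2`:
`Σ_{f ∈ M_n} d(f)e(cf/g) = q^n(n+1-2 deg g)/|g| + (q^n/|g|)
  Σ_λ Σ_{η₁,η₂} Σ_{0 ≤ k ≤ μ} b_{μ-k}(λ,η₁,η₂) Σ_{f ∈ M_k} d(f)e(λc̄f/g)`,
the dual term being empty when `μ < 0`. -/
theorem voronoi_divisor
    (F : Type) [Field F] [Fintype F] (q : ℕ) (hq : q = Fintype.card F)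
    (n : ℕ) (g c cbar : Polynomial F)
    (hg : g.Monic) (hgdeg : 2 * g.natDegree ≤ n)
    (hcop : IsCoprime c g) (hcbar : g ∣ c * cbar - 1) :
    (∑ᶠ f ∈ {f : Polynomial F | f.Monic ∧ f.natDegree = n},
        (dCount f : ℂ) * eFrac (c * f) g) =
      (q : ℂ) ^ n * ((n : ℂ) + 1 - 2 * (g.natDegree : ℂ)) / (q : ℂ) ^ g.natDegree +
      (q : ℂ) ^ n / (q : ℂ) ^ g.natDegree *
        ∑ lam : Fˣ, ∑ η₁ ∈ Finset.range 2, ∑ η₂ ∈ Finset.range 2,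
          ∑ k ∈ Finset.range (2 * (g.natDegree : ℤ) - (n : ℤ) - 2 + 1).toNat,
            bCoeffD (lam : F) η₁ η₂
                (2 * (g.natDegree : ℤ) - (n : ℤ) - 2 - (k : ℤ)).toNat *
              ∑ᶠ f ∈ {f : Polynomial F | f.Monic ∧ f.natDegree = k},
                (dCount f : ℂ) * eFrac (Polynomial.C (lam : F) * cbar * f) g :=
  voronoi_divisor_general F q hq n g c cbar hg hgdeg hcop
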